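/- Let N ≥ 2 and 1 ≤ i ≤ N-1. The state of an N-qubit W state after losing i qubits is the mixture σ_i = (i/N)·|0^{N-i}⟩⟨0^{N-i}| + ((N-i)/N)·|W_{N-i}⟩⟨W_{N-i}|; precisely, the partial trace over the first i qubits of the rank-one projector |W_N⟩⟨W_N| equals (i/N) times the projector onto the all-zeros basis string of length N-i plus ((N-i)/N) times the projector onto the (N-i)-qubit W state. -/

import Mathlib

open scoped Classical

/-- The number of coordinates equal to `1` in a bit string. -/
noncomputable def onesCount {α : Type*} [Fintype α] (x : α → Fin 2) : ℕ :=
  (Finset.univ.filter fun m => x m = 1).card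

/-- The W state on qubits labeled by a finite type `α`:
amplitude `1/√|α|` on strings with exactly one `1`. -/
noncomputable def Wvec (α : Type*) [Fintype α] : (α → Fin 2) → ℂ := fun x =>
  if onesCount x = 1 then ((1 / Real.sqrt (Fintype.card α) : ℝ) : ℂ) else 0

/-- The rank-one projector `|v⟩⟨v|` of a vector `v`. -/
noncomputable def projector {ι : Type*} (v : ι → ℂ) : ι → ι → ℂ :=
  fun x x' => v x * (starRingEnd ℂ) (v x')

/-- The partial trace over the first tensor factor:
`(Tr_A M)(y,y') = ∑_a M((a,y),(a,y'))`. -/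
noncomputable def ptraceFst {A B : Type*} [Fintype A]
    (M : (A × B) → (A × B) → ℂ) : B → B → ℂ :=
  fun y y' => ∑ a : A, M (a, y) (a, y')

/-- The `(i+m)`-qubit W state under the identification of
`Fin (i+m) → Fin 2` with `(Fin i → Fin 2) × (Fin m → Fin 2)`. -/
noncomputable def Wpair (i m : ℕ) : ((Fin i → Fin 2) × (Fin m → Fin 2)) → ℂ :=
  fun p => Wvec (Fin i ⊕ Fin m) (Sum.elim p.1 p.2)

/-- The computational basis vector `|b^m⟩` on the constant string with all
coordinates equal to `b`. -/
def ketConst (m : ℕ) (b : Fin 2) : (Fin m → Fin 2) → ℂ :=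
  fun y => if y = (fun _ => b) then 1 else 0

/-! The single `1` of a weight-one string on `α ⊕ β` lies either in `α` or in `β`, so
`|W_{α ⊕ β}⟩ = √(|α|/n) |W_α⟩|0⟩ + √(|β|/n) |0⟩|W_β⟩` with `n = |α| + |β|`. As `|W_α⟩` and `|0⟩`
are orthonormal, the cross terms vanish under the partial trace over `α`, which leaves
`(|α|/n) |0⟩⟨0| + (|β|/n) |W_β⟩⟨W_β|`. -/

open Finset

noncomputable def ketZero (α : Type*) : (α → Fin 2) → ℂ := Pi.single 0 1

lemma ketConst_zero (m : ℕ) : ketConst m 0 = ketZero (Fin m) := by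
  funext y
  simp only [ketConst, ketZero, Pi.single_apply]
  congr

section

variable {α β : Type*}

lemma onesCount_eq_zero_iff [Fintype α] {x : α → Fin 2} : onesCount x = 0 ↔ x = 0 := by
  simp only [onesCount, card_eq_zero, filter_eq_empty_iff, mem_univ, true_implies, funext_iff,
    Pi.zero_apply]
  exact forall_congr' fun m => by omega

@[simp]
lemma onesCount_zero [Fintype α] : onesCount (0 : α → Fin 2) = 0 :=
  onesCount_eq_zero_iff.mpr rfl

lemma onesCount_le_card [Fintype α] (x : α → Fin 2) : onesCount x ≤ Fintype.card α :=
  card_filter_le _ _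

lemma onesCount_sumElim [Fintype α] [Fintype β] (x : α → Fin 2) (y : β → Fin 2) :
    onesCount (Sum.elim x y) = onesCount x + onesCount y := by
  simp only [onesCount, card_filter, Fintype.sum_sum_type, Sum.elim_inl, Sum.elim_inr]
  congr

lemma onesCount_eq_one_iff [Fintype α] [DecidableEq α] {x : α → Fin 2} :
    onesCount x = 1 ↔ ∃ j, x = Pi.single j 1 := by
  simp only [onesCount, card_eq_one, Finset.ext_iff, mem_filter, mem_univ, true_and,
    mem_singleton, funext_iff]
  refine exists_congr fun j => forall_congr' fun m => ?_
  rcases eq_or_ne m j with rfl | h <;> simp [*]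
  omega

lemma card_onesCount_eq_one [Fintype α] [DecidableEq α] :
    #{x : α → Fin 2 | onesCount x = 1} = Fintype.card α := by
  have hinj : Function.Injective fun j : α => (Pi.single j 1 : α → Fin 2) :=
    fun j j' h => by simpa [Pi.single_apply, eq_comm] using congrFun h j
  rw [← card_univ, ← card_map ⟨_, hinj⟩]
  congr 1
  ext x
  simp [onesCount_eq_one_iff, eq_comm]

lemma Wvec_of_onesCount_ne_one [Fintype α] {x : α → Fin 2} (h : onesCount x ≠ 1) :
    Wvec α x = 0 :=
  if_neg h

@[simp]
lemma Wvec_zero [Fintype α] : Wvec α 0 = 0 := Wvec_of_onesCount_ne_one (by simp)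

@[simp]
lemma conj_Wvec [Fintype α] (x : α → Fin 2) : starRingEnd ℂ (Wvec α x) = Wvec α x := by
  unfold Wvec
  split_ifs <;> simp

lemma Wvec_mul_self [Fintype α] (x : α → Fin 2) :
    Wvec α x * Wvec α x = if onesCount x = 1 then ((Fintype.card α : ℂ))⁻¹ else 0 := by
  unfold Wvec
  split_ifs
  · rw [← Complex.ofReal_mul, ← Complex.ofReal_natCast, ← Complex.ofReal_inv, div_mul_div_comm,
      one_mul, Real.mul_self_sqrt (Nat.cast_nonneg _), one_div]
  · exact mul_zero 0

lemma sum_Wvec_mul_conj [Fintype α] [DecidableEq α] [Nonempty α] :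
    ∑ x, Wvec α x * starRingEnd ℂ (Wvec α x) = 1 := by
  simp only [conj_Wvec, Wvec_mul_self, ← sum_filter, sum_const, card_onesCount_eq_one,
    nsmul_eq_mul]
  exact mul_inv_cancel₀ (by simp)

lemma sum_ketZero_mul_conj [Fintype α] [DecidableEq α] :
    ∑ x, ketZero α x * starRingEnd ℂ (ketZero α x) = 1 := by
  simp [ketZero, Pi.single_apply]

lemma sum_Wvec_mul_conj_ketZero [Fintype α] [DecidableEq α] :
    ∑ x, Wvec α x * starRingEnd ℂ (ketZero α x) = 0 := by
  simp [ketZero, Pi.single_apply]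

lemma Wvec_eq_sqrt_mul_Wvec {γ : Type*} [Fintype α] [Fintype γ] {x : α → Fin 2} {z : γ → Fin 2}
    (h : onesCount x = onesCount z) :
    Wvec α x = (√(Fintype.card γ / Fintype.card α) : ℝ) * Wvec γ z := by
  by_cases hz : onesCount z = 1
  · have hγ : (Fintype.card γ : ℝ) ≠ 0 := by
      have := onesCount_le_card z
      exact_mod_cast (show Fintype.card γ ≠ 0 by omega)
    simp only [Wvec, h, hz, if_true, ← Complex.ofReal_mul, Complex.ofReal_inj]
    rw [Real.sqrt_div (Nat.cast_nonneg _)]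
    field_simp
  · simp [Wvec_of_onesCount_ne_one, h, hz]

lemma Wvec_sumElim [Fintype α] [Fintype β] (x : α → Fin 2) (y : β → Fin 2) :
    Wvec (α ⊕ β) (Sum.elim x y) =
      Wvec α x * ((√(Fintype.card α / Fintype.card (α ⊕ β)) : ℝ) * ketZero β y) +
        ketZero α x * ((√(Fintype.card β / Fintype.card (α ⊕ β)) : ℝ) * Wvec β y) := by
  rcases eq_or_ne x 0 with rfl | hx <;> rcases eq_or_ne y 0 with rfl | hy
  · simp [ketZero, Sum.elim_zero_zero]
  · rw [Wvec_eq_sqrt_mul_Wvec (z := y) (by simp [onesCount_sumElim])]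
    simp [ketZero, hy, mul_comm]
  · rw [Wvec_eq_sqrt_mul_Wvec (z := x) (by simp [onesCount_sumElim])]
    simp [ketZero, hx, mul_comm]
  · have hx' := mt onesCount_eq_zero_iff.mp hx
    have hy' := mt onesCount_eq_zero_iff.mp hy
    rw [Wvec_of_onesCount_ne_one (by rw [onesCount_sumElim]; omega)]
    simp [ketZero, hx, hy]

lemma ptraceFst_projector_add_tmul [Fintype α] {f f' : α → ℂ} (g g' : β → ℂ)
    (hf : ∑ a, f a * starRingEnd ℂ (f a) = 1) (hf' : ∑ a, f' a * starRingEnd ℂ (f' a) = 1)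
    (horth : ∑ a, f a * starRingEnd ℂ (f' a) = 0) :
    ptraceFst (projector fun p : α × β => f p.1 * g p.2 + f' p.1 * g' p.2) =
      fun y y' => projector g y y' + projector g' y y' := by
  have horth' : ∑ a, f' a * starRingEnd ℂ (f a) = 0 := by
    simpa [mul_comm] using congrArg (starRingEnd ℂ) horth
  funext y y'
  simp only [ptraceFst, projector, map_add, map_mul]
  calc _ = (∑ a, f a * starRingEnd ℂ (f a)) * (g y * starRingEnd ℂ (g y'))
        + (∑ a, f a * starRingEnd ℂ (f' a)) * (g y * starRingEnd ℂ (g' y'))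
        + (∑ a, f' a * starRingEnd ℂ (f a)) * (g' y * starRingEnd ℂ (g y'))
        + (∑ a, f' a * starRingEnd ℂ (f' a)) * (g' y * starRingEnd ℂ (g' y')) := by
          simp only [sum_mul, ← sum_add_distrib]
          exact sum_congr rfl fun a _ => by ring
    _ = _ := by rw [hf, hf', horth, horth']; ring

lemma projector_ofReal_mul (c : ℝ) (v : α → ℂ) :
    projector (fun x => (c : ℂ) * v x) = fun x x' => ((c ^ 2 : ℝ) : ℂ) * projector v x x' := by
  funext x x'
  simp only [projector, map_mul, Complex.conj_ofReal]
  push_cast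
  ring

theorem ptraceFst_projector_Wvec_sumElim [Fintype α] [DecidableEq α] [Nonempty α] [Fintype β] :
    ptraceFst (projector fun p : (α → Fin 2) × (β → Fin 2) => Wvec (α ⊕ β) (Sum.elim p.1 p.2)) =
      fun y y' =>
        ((Fintype.card α / Fintype.card (α ⊕ β) : ℝ) : ℂ) * projector (ketZero β) y y' +
          ((Fintype.card β / Fintype.card (α ⊕ β) : ℝ) : ℂ) * projector (Wvec β) y y' := by
  simp only [Wvec_sumElim]
  rw [ptraceFst_projector_add_tmul (fun y => _ * ketZero β y) (fun y => _ * Wvec β y)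
    sum_Wvec_mul_conj sum_ketZero_mul_conj sum_Wvec_mul_conj_ketZero,
    projector_ofReal_mul, projector_ofReal_mul]
  simp only [Real.sq_sqrt, div_nonneg, Nat.cast_nonneg]

end

theorem w_state_partial_trace_general (N i : ℕ) (hi1 : 1 ≤ i) (hi : i ≤ N - 1) :
    ptraceFst (projector (Wpair i (N - i))) =
      fun y y' =>
        (((i : ℝ) / (N : ℝ) : ℝ) : ℂ) * projector (ketConst (N - i) 0) y y' +
        ((((N - i : ℕ) : ℝ) / (N : ℝ) : ℝ) : ℂ) * projector (Wvec (Fin (N - i))) y y' := by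
  have : Nonempty (Fin i) := ⟨⟨0, hi1⟩⟩
  have hN : i + (N - i) = N := by omega
  unfold Wpair
  simpa [ketConst_zero, Fintype.card_sum, hN] using
    ptraceFst_projector_Wvec_sumElim (α := Fin i) (β := Fin (N - i))

/-- Losing `i` of the `N` qubits of a W state leaves the mixture
`σ_i = (i/N)·|0^{N-i}⟩⟨0^{N-i}| + ((N-i)/N)·|W_{N-i}⟩⟨W_{N-i}|`. -/
theorem w_state_partial_trace (N i : ℕ) (hN : 2 ≤ N) (hi1 : 1 ≤ i) (hi : i ≤ N - 1) :
    ptraceFst (projector (Wpair i (N - i))) =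
      fun y y' =>
        (((i : ℝ) / (N : ℝ) : ℝ) : ℂ) * projector (ketConst (N - i) 0) y y' +
        ((((N - i : ℕ) : ℝ) / (N : ℝ) : ℝ) : ℂ) * projector (Wvec (Fin (N - i))) y y' :=
  w_state_partial_trace_general N i hi1 hi
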